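/- For every integer n with 86 ≤ n ≤ 97 there exists a code C ⊆ {0, 1, 2, 3}^n (alphabet size 4) with minimum Hamming distance at least 3 such that 7 · 97 · |C| ≥ 4^n; in particular |C| > 4^{n−5}, so r_4(n, 3) < 5 = r_4^L(n, 3). -/

import Mathlib

/-!
Read the letters of `x ∈ {0,1,2,3}ⁿ` as integers and send `x` to its syndrome
`(∑ xᵢ mod 7, ∑ i·xᵢ mod 97)`. Two words with the same syndrome cannot differ in one or two
coordinates: their difference `e` has entries in `(-4, 4)`, so `7 ∣ ∑ eᵢ` forces `eᵢ = 0` when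
one coordinate differs and `eⱼ = -eᵢ` when two do; then `97 ∣ (i - j)·eᵢ` with `0 < |i - j| < 97`
is impossible. Hence every fiber of the syndrome map is a code of minimum distance `3`, and by
pigeonhole one of the `7 · 97` fibers has at least `4ⁿ / 679 > 4ⁿ⁻⁵` elements.
-/

open Finset

def syndrome (p r : ℕ) {n q : ℕ} (x : Fin n → Fin q) : ZMod p × ZMod r :=
  (((∑ i, ((x i : ℕ) : ℤ) : ℤ) : ZMod p),
    ((∑ i : Fin n, ((i : ℕ) : ℤ) * ((x i : ℕ) : ℤ) : ℤ) : ZMod r))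

theorem Fintype.exists_card_le_card_mul_card_fiber {α β : Type*} [Fintype α] [Fintype β]
    [Nonempty β] [DecidableEq β] (f : α → β) :
    ∃ y : β, Fintype.card α ≤ Fintype.card β * #{x | f x = y} := by
  have hβ : (Fintype.card β : ℚ) ≠ 0 := by positivity
  obtain ⟨y, hy⟩ := Fintype.exists_le_card_fiber_of_nsmul_le_card f
    (b := (Fintype.card α : ℚ) / Fintype.card β) (by rw [nsmul_eq_mul, mul_div_cancel₀ _ hβ])
  refine ⟨y, ?_⟩
  rw [div_le_iff₀' (by positivity)] at hy
  exact_mod_cast hy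

theorem Int.eq_zero_of_dvd_add_of_dvd_mul_add_mul {p q r : ℕ} {a b i j : ℤ} (haq : |a| < q)
    (hbq : |b| < q) (hij : i ≠ j) (hijr : |i - j| < r) (hqp : 2 * q ≤ p + 1) (hr : r.Prime)
    (hqr : q ≤ r) (hp : (p : ℤ) ∣ a + b) (hr' : (r : ℤ) ∣ i * a + j * b) : a = 0 := by
  have hab : a + b = 0 := Int.eq_zero_of_abs_lt_dvd hp (by
    calc |a + b| ≤ |a| + |b| := abs_add_le a b
      _ < p := by omega)
  have hdvd : (r : ℤ) ∣ (i - j) * a := by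
    rwa [show b = -a by omega, show i * a + j * -a = (i - j) * a by ring] at hr'
  rcases (Nat.prime_iff_prime_int.mp hr).dvd_mul.mp hdvd with h | h
  · exact absurd (Int.eq_zero_of_abs_lt_dvd h hijr) (sub_ne_zero.mpr hij)
  · exact Int.eq_zero_of_abs_lt_dvd h (by omega)

theorem three_le_hammingDist_of_syndrome_eq {n q p r : ℕ} (hqp : 2 * q ≤ p + 1)
    (hr : r.Prime) (hqr : q ≤ r) (hnr : n ≤ r) {x y : Fin n → Fin q}
    (hxy : syndrome p r x = syndrome p r y) (hne : x ≠ y) : 3 ≤ hammingDist x y := by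
  by_contra! hd
  set e : Fin n → ℤ := fun i => ((y i : ℕ) : ℤ) - ((x i : ℕ) : ℤ)
  set s : Finset (Fin n) := {i | x i ≠ y i}
  have he : ∀ i, |e i| < q := fun i => by
    have := (x i).isLt; have := (y i).isLt; rw [abs_sub_lt_iff]; omega
  have hmem : ∀ {i}, i ∈ s ↔ e i ≠ 0 := by
    simp [s, e, sub_eq_zero, Fin.ext_iff, eq_comm]
  have hsum : ∀ w : Fin n → ℤ, ∑ i ∈ s, w i * e i = ∑ i, w i * e i := fun w =>
    sum_filter_of_ne fun i _ h => mem_filter.mp (hmem.mpr (right_ne_zero_of_mul h)) |>.2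
  have hp : (p : ℤ) ∣ ∑ i ∈ s, 1 * e i := by
    rw [hsum]
    simp only [one_mul, e, sum_sub_distrib]
    exact (ZMod.intCast_eq_intCast_iff_dvd_sub _ _ _).mp (congrArg Prod.fst hxy)
  have hr' : (r : ℤ) ∣ ∑ i ∈ s, ((i : ℕ) : ℤ) * e i := by
    rw [hsum]
    simp only [e, mul_sub, sum_sub_distrib]
    exact (ZMod.intCast_eq_intCast_iff_dvd_sub _ _ _).mp (congrArg Prod.snd hxy)
  obtain hs | hs : #s = 1 ∨ #s = 2 := by
    have : 0 < #s := hammingDist_pos.mpr hne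
    have : #s < 3 := hd
    omega
  · obtain ⟨i, hi⟩ := card_eq_one.mp hs
    rw [hi, sum_singleton, one_mul] at hp
    refine hmem.mp (show i ∈ s by simp [hi]) ?_
    exact Int.eq_zero_of_abs_lt_dvd hp (by have := he i; omega)
  · obtain ⟨i, j, hij, hij'⟩ := card_eq_two.mp hs
    rw [hij', sum_pair hij, one_mul, one_mul] at hp
    rw [hij', sum_pair hij] at hr'
    refine hmem.mp (show i ∈ s by simp [hij']) ?_
    exact Int.eq_zero_of_dvd_add_of_dvd_mul_add_mul (he i) (he j)
      (by exact_mod_cast Fin.val_ne_of_ne hij) (by rw [abs_sub_lt_iff]; omega) hqp hr hqr hp hr'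

/-- For every `86 ≤ n ≤ 97` there is a `4`-ary code of length `n` with
minimum Hamming distance at least `3` such that `7 · 97 · |C| ≥ 4^n`; in particular
`|C| > 4^{n−5}` (so `r_4(n,3) < 5 = r_4^L(n,3)`). -/
theorem stmt_16 (n : ℕ) (h1 : 86 ≤ n) (h2 : n ≤ 97) :
    ∃ C : Finset (Fin n → Fin 4),
      (∀ x ∈ C, ∀ y ∈ C, x ≠ y → 3 ≤ hammingDist x y) ∧
      4 ^ n ≤ 7 * 97 * C.card ∧
      4 ^ (n - 5) < C.card := by
  obtain ⟨c, hc⟩ := Fintype.exists_card_le_card_mul_card_fiber (syndrome 7 97 (n := n) (q := 4))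
  simp only [Fintype.card_fun, Fintype.card_fin, Fintype.card_prod, ZMod.card] at hc
  refine ⟨univ.filter (syndrome 7 97 · = c), fun x hx y hy hne => ?_, hc, ?_⟩
  · exact three_le_hammingDist_of_syndrome_eq (by norm_num) (by norm_num) (by norm_num) h2
      ((mem_filter.mp hx).2.trans (mem_filter.mp hy).2.symm) hne
  · have h4 : 4 ^ n = 4 ^ (n - 5) * 4 ^ 5 := (pow_sub_mul_pow 4 (by omega : 5 ≤ n)).symm
    have : 0 < 4 ^ (n - 5) := by positivity
    omega
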